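/- Let A be a noetherian commutative ring and M an A-module whose associated prime ideals are pairwise disjoint (P + Q = A for distinct associated primes P, Q); for instance, any meager A-module. For each associated prime P let M(P) = {m ∈ M : P^n m = 0 for some n ≥ 1}. Then M is the internal direct sum of the submodules M(P) over the associated primes P of M (the family (M(P)) is independent and its supremum is M), and for each associated prime P one has Asso_A(M(P)) = {P}. -/

import Mathlib

/-!
Powers of distinct associated primes are again coprime. A relation among finitely many
elements of the components `M(P)` takes place inside the torsion submodules `M[P ^ m]` of a
common power, and these are independent for pairwise coprime ideals. For `x ∈ M` the cyclic
module `A ∙ x` has finitely many associated primes `Pᵢ`, among them all minimal primes of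
`Ann(x)`, so `∏ Pᵢ ≤ √Ann(x)` and some `∏ Pᵢ ^ k = ⨅ Pᵢ ^ k` kills `x`; by the Chinese
remainder theorem `x ∈ ∑ M[Pᵢ ^ k]`. An associated prime of `M(P)` contains a power of `P`,
hence `P` itself, and coprimality rules out any prime strictly above `P`.
-/

/-- The `P`-primary component `M(P) = {m ∈ M : P^n m = 0 for some n ≥ 1}` of a module. -/
def primaryComponent (A : Type u) [CommRing A]
    (M : Type v) [AddCommGroup M] [Module A M] (P : Ideal A) : Submodule A M :=
  ⨆ n : ℕ, Submodule.torsionBySet A M ((P ^ (n + 1) : Ideal A) : Set A)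

open Submodule

section PrimaryComponent

variable {A : Type u} [CommRing A] {M : Type v} [AddCommGroup M] [Module A M]

theorem primaryComponent_eq_ideal_primaryComponent (P : Ideal A) :
    primaryComponent A M P = Ideal.primaryComponent M P :=
  le_antisymm (iSup_le fun n => le_iSup (fun i => torsionBySet A M ↑(P ^ i)) (n + 1))
    (iSup_le fun n => (torsionBySet_le_torsionBySet_pow n (n + 1) n.le_succ P).trans
      (le_iSup (fun i => torsionBySet A M ↑(P ^ (i + 1))) n))

theorem iSupIndep_primaryComponent_of_pairwise_sup_eq_top {ι : Type*} {p : ι → Ideal A}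
    (hp : Pairwise fun i j => p i ⊔ p j = ⊤) :
    iSupIndep fun i => Ideal.primaryComponent M (p i) := by
  rw [iSupIndep_iff_finsetSum_eq_zero_imp_eq_zero]
  intro s v hv hsum
  simp only [Ideal.primaryComponent_mem] at hv
  choose! e he using hv
  have hindep : iSupIndep fun i => torsionBySet A M ↑(p i ^ s.sup e) :=
    iSupIndep_iff_supIndep.mpr fun _ =>
      supIndep_torsionBySet_ideal fun i _ j _ hij => Ideal.pow_sup_pow_eq_top (hp hij)
  rw [iSupIndep_iff_finsetSum_eq_zero_imp_eq_zero] at hindep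
  exact hindep s v
    (fun i hi => torsionBySet_le_torsionBySet_pow _ _ (s.le_sup hi) _ (he i hi)) hsum

theorem iSup_primaryComponent_associatedPrimes_eq_top_of_finite [IsNoetherianRing A]
    [Module.Finite A M]
    (h : (associatedPrimes A M).Pairwise fun P Q => P ⊔ Q = ⊤) :
    ⨆ P ∈ associatedPrimes A M, Ideal.primaryComponent M P = ⊤ := by
  set S := (associatedPrimes.finite A M).toFinset
  have hS : ∀ {P}, P ∈ S ↔ P ∈ associatedPrimes A M := Set.Finite.mem_toFinset _
  have hrad : ∏ P ∈ S, P ≤ (Module.annihilator A M).radical := by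
    refine Ideal.prod_le_inf.trans ?_
    rw [← Ideal.sInf_minimalPrimes]
    exact le_sInf fun Q hQ => Finset.inf_le (hS.mpr
      (Module.associatedPrimes.minimalPrimes_annihilator_subset_associatedPrimes A M hQ))
  obtain ⟨k, hk⟩ := Ideal.exists_pow_le_of_le_radical_of_fg hrad (IsNoetherian.noetherian _)
  have hcop : (S : Set (Ideal A)).Pairwise fun P Q => P ^ k ⊔ Q ^ k = ⊤ :=
    fun P hP Q hQ hPQ => Ideal.pow_sup_pow_eq_top (h (hS.mp hP) (hS.mp hQ) hPQ)
  have hkill : ⨅ P ∈ S, P ^ k ≤ Module.annihilator A M := by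
    rwa [← Ideal.prod_eq_iInf_of_pairwise_isCoprime
      fun P hP Q hQ hPQ => Ideal.isCoprime_iff_sup_eq.mpr (hcop hP hQ hPQ), Finset.prod_pow]
  have htop : torsionBySet A M ↑(⨅ P ∈ S, P ^ k) = ⊤ :=
    (Module.isTorsionBySet_iff_torsionBySet_eq_top _).mp
      ((Module.isTorsionBySet_iff_subset_annihilator A M).mpr hkill)
  rw [← iSup_torsionBySet_ideal_eq_torsionBySet_iInf hcop] at htop
  exact eq_top_iff.mpr (htop.ge.trans
    (iSup₂_mono' fun P hP => ⟨P, hS.mp hP, le_iSup (fun i => torsionBySet A M ↑(P ^ i)) k⟩))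

theorem iSup_primaryComponent_associatedPrimes_eq_top [IsNoetherianRing A]
    (h : (associatedPrimes A M).Pairwise fun P Q => P ⊔ Q = ⊤) :
    ⨆ P : associatedPrimes A M, Ideal.primaryComponent M (P : Ideal A) = ⊤ := by
  refine eq_top_iff.mpr fun x _ => ?_
  set N := span A {x}
  have hN : associatedPrimes A N ⊆ associatedPrimes A M :=
    associatedPrimes.subset_of_injective N.injective_subtype
  have hx : (⟨x, mem_span_singleton_self x⟩ : N) ∈
      ⨆ P ∈ associatedPrimes A N, Ideal.primaryComponent N P := by
    rw [iSup_primaryComponent_associatedPrimes_eq_top_of_finite (h.mono hN)]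
    trivial
  have hmap : (⨆ P ∈ associatedPrimes A N, Ideal.primaryComponent N P).map N.subtype ≤
      ⨆ P : associatedPrimes A M, Ideal.primaryComponent M (P : Ideal A) := by
    simp only [Submodule.map_iSup]
    refine iSup₂_le fun P hP => le_iSup_of_le ⟨P, hN hP⟩ ?_
    exact map_le_iff_le_comap.mpr fun y hy => Ideal.primaryComponent_map_mem P N.subtype ⟨y, hy⟩
  exact hmap (mem_map_of_mem hx)

theorem le_of_mem_associatedPrimes_primaryComponent {P Q : Ideal A}
    (hQ : Q ∈ associatedPrimes A (Ideal.primaryComponent M P)) : P ≤ Q := by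
  obtain ⟨hQp, z, hz⟩ := hQ
  obtain ⟨n, hn⟩ := (Ideal.primaryComponent_mem _ _ _).mp z.2
  have hPn : P ^ n ≤ (⊥ : Submodule A (Ideal.primaryComponent M P)).colon {z} := fun a ha => by
    rw [mem_colon_singleton, mem_bot, ← Subtype.coe_inj]
    exact (mem_torsionBySet_iff _ _).mp hn ⟨a, ha⟩
  rw [hz] at hQp ⊢
  exact hQp.le_of_pow_le (hPn.trans Ideal.le_radical)

theorem mem_associatedPrimes_primaryComponent [IsNoetherianRing A] {P : Ideal A}
    (hP : P ∈ associatedPrimes A M) : P ∈ associatedPrimes A (Ideal.primaryComponent M P) := by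
  obtain ⟨hprime, x, hx⟩ := isAssociatedPrime_iff.mp hP
  have hxP : x ∈ Ideal.primaryComponent M P := by
    refine (Ideal.primaryComponent_mem _ _ _).mpr ⟨1, (mem_torsionBySet_iff _ _).mpr ?_⟩
    rintro ⟨a, ha⟩
    have ha' : a ∈ (⊥ : Submodule A M).colon {x} := hx ▸ by simpa using ha
    simpa using mem_colon_singleton.mp ha'
  refine isAssociatedPrime_iff.mpr ⟨hprime, ⟨x, hxP⟩, hx.trans ?_⟩
  ext a
  simp [mem_colon_singleton]

theorem associatedPrimes_primaryComponent [IsNoetherianRing A]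
    (h : (associatedPrimes A M).Pairwise fun P Q => P ⊔ Q = ⊤) {P : Ideal A}
    (hP : P ∈ associatedPrimes A M) :
    associatedPrimes A (Ideal.primaryComponent M P) = {P} := by
  refine Set.eq_singleton_iff_unique_mem.mpr ⟨mem_associatedPrimes_primaryComponent hP,
    fun Q hQ => by_contra fun hQP => ?_⟩
  have hQM : Q ∈ associatedPrimes A M :=
    associatedPrimes.subset_of_injective (Submodule.injective_subtype _) hQ
  have htop : Q ⊔ P = ⊤ := h hQM hP hQP
  rw [sup_eq_left.mpr (le_of_mem_associatedPrimes_primaryComponent hQ)] at htop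
  exact hQ.isPrime.ne_top htop

end PrimaryComponent

/-- Let `A` be a noetherian commutative ring and `M` an `A`-module whose associated primes
are pairwise disjoint (`P ⊔ Q = A` for distinct associated primes, e.g. `M` meager).  Then
`M` is the internal direct sum of the submodules `M(P)` over its associated primes (the
family is independent with supremum `M`), and `Asso_A(M(P)) = {P}` for each associated
prime `P`. -/
theorem directSum_primaryComponents_of_pairwise_disjoint
    (A : Type u) [CommRing A] [IsNoetherianRing A]
    (M : Type v) [AddCommGroup M] [Module A M]
    (hdisj : ∀ P ∈ associatedPrimes A M, ∀ Q ∈ associatedPrimes A M,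
      P ≠ Q → P ⊔ Q = ⊤) :
    iSupIndep (fun P : associatedPrimes A M => primaryComponent A M (P : Ideal A)) ∧
      (⨆ P : associatedPrimes A M, primaryComponent A M (P : Ideal A)) = ⊤ ∧
      ∀ P ∈ associatedPrimes A M,
        associatedPrimes A (primaryComponent A M P) = {P} := by
  simp only [primaryComponent_eq_ideal_primaryComponent]
  refine ⟨iSupIndep_primaryComponent_of_pairwise_sup_eq_top
      fun P Q hPQ => hdisj P P.2 Q Q.2 (Subtype.coe_injective.ne hPQ),
    iSup_primaryComponent_associatedPrimes_eq_top hdisj, fun P hP => ?_⟩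
  rw [primaryComponent_eq_ideal_primaryComponent]
  exact associatedPrimes_primaryComponent hdisj hP
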